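/- arXiv:1706.08988 — 3 statements merged into one kernel-verified Lean document; each statement's English description precedes it below -/
import Mathlib

section
/- Let A and 𝔠 be unital complex algebras and let σ : A → 𝔠 be a unital algebra homomorphism such that spec_A(a) ⊆ spec_𝔠(σ(a)) for every a ∈ A. Then for every simple left A-module M, every element x ∈ ker(σ) annihilates M; that is, ker(σ) is contained in the annihilator of every simple left A-module. -/
/-- If `σ : A → 𝔠` is a unital algebra homomorphism with `spec_A(a) ⊆ spec_𝔠(σ a)` for
all `a`, then `ker σ` annihilates every simple left `A`-module. -/
theorem stmt1 {A 𝔠 : Type*} [Ring A] [Algebra ℂ A] [Ring 𝔠] [Algebra ℂ 𝔠]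
    (σ : A →ₐ[ℂ] 𝔠) (hspec : ∀ a : A, spectrum ℂ a ⊆ spectrum ℂ (σ a))
    (M : Type*) [AddCommGroup M] [Module A M] (hM : IsSimpleModule A M) :
    ∀ x : A, σ x = 0 → ∀ v : M, x • v = 0 := by
  intro x hx v
  by_contra h
  have hne : x • v ≠ 0 := h
  have hspan : Submodule.span A {x • v} = ⊤ := by
    rcases eq_bot_or_eq_top (Submodule.span A {x • v}) with h' | h'
    · exact absurd (h' ▸ Submodule.mem_span_singleton_self (x • v)) (by simp [hne])
    · exact h'
  have hvmem : v ∈ Submodule.span A {x • v} := hspan ▸ Submodule.mem_top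
  obtain ⟨y, hy⟩ := Submodule.mem_span_singleton.mp hvmem
  have hσ : σ (y * x) = 0 := by rw [map_mul, hx, mul_zero]
  have h1 : (1 : ℂ) ∉ spectrum ℂ (y * x) := by
    intro hmem
    have h2 := hspec _ hmem
    rw [hσ, spectrum.mem_iff] at h2
    exact h2 (by simp)
  rw [spectrum.notMem_iff, map_one] at h1
  obtain ⟨u, hu⟩ := h1
  have hv0 : v = 0 := by
    have huv : (u : A) • v = 0 := by
      rw [hu, sub_smul, one_smul, mul_smul, hy, sub_self]
    calc v = ((↑u⁻¹ * ↑u : A)) • v := by rw [u.inv_mul, one_smul]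
    _ = (↑u⁻¹ : A) • ((u : A) • v) := mul_smul _ _ _
    _ = 0 := by rw [huv, smul_zero]
  exact hne (by rw [hv0, smul_zero])
end

section
/- Let B be a unital complex Banach algebra and let b ∈ B. Suppose b is polynomially bounded, i.e. there exists a constant c > 0 such that ‖exp(iλb) − 1‖ ≤ c(1 + |λ|)^c for all λ ∈ ℝ. Then the spectrum of b is real: every μ ∈ spec_B(b) satisfies Im(μ) = 0. -/
/-!
If `μ ∈ σ(b)` then `exp(iλμ) ∈ σ(exp(iλb))`, so `exp(-λ Im μ) = |exp(iλμ)| ≤ ‖exp(iλb)‖ ‖1‖`,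
which is polynomially bounded in `λ`. Choosing the sign of `λ` opposite to that of `Im μ` makes the
left side `exp(|λ| |Im μ|)`, and an exponential outgrows every polynomial unless `Im μ = 0`.
-/

open NormedSpace Filter

lemma Real.not_forall_exp_mul_le_mul_rpow {a C c : ℝ} (ha : 0 < a) :
    ¬ ∀ t > 0, Real.exp (a * t) ≤ C * (1 + t) ^ c := by
  intro h
  obtain ⟨x, hx_large, hx_one⟩ := ((tendsto_exp_mul_div_rpow_atTop c a ha).eventually_gt_atTop
    (Real.exp a * C)).and (eventually_gt_atTop 1) |>.exists
  have hbound : Real.exp (a * x) ≤ Real.exp a * C * x ^ c :=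
    calc Real.exp (a * x) = Real.exp a * Real.exp (a * (x - 1)) := by
          rw [← Real.exp_add]; ring_nf
      _ ≤ Real.exp a * (C * (1 + (x - 1)) ^ c) := by gcongr; exact h _ (by linarith)
      _ = Real.exp a * C * x ^ c := by ring_nf
  exact hx_large.not_ge <| (div_le_iff₀ (Real.rpow_pos_of_pos (by linarith) c)).2 hbound

theorem spectrum.norm_exp_le_of_mem {𝕜 A : Type*} [RCLike 𝕜] [NormedRing A] [NormedAlgebra 𝕜 A]
    [CompleteSpace A] {a : A} {z : 𝕜} (hz : z ∈ spectrum 𝕜 a) :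
    ‖exp z‖ ≤ ‖exp a‖ * ‖(1 : A)‖ :=
  spectrum.norm_le_norm_mul_of_mem (spectrum.exp_mem_exp a hz)

theorem spectrum.exp_neg_mul_im_le_norm_exp_smul {B : Type*} [NormedRing B] [NormedAlgebra ℂ B]
    [CompleteSpace B] {b : B} {μ : ℂ} (hμ : μ ∈ spectrum ℂ b) {l : ℝ} (hl : l ≠ 0) :
    Real.exp (-(l * μ.im)) ≤ ‖exp (((l : ℂ) * Complex.I) • b)‖ * ‖(1 : B)‖ := by
  have hu : (l : ℂ) * Complex.I ≠ 0 := mul_ne_zero (by exact_mod_cast hl) Complex.I_ne_zero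
  have hmem : (l : ℂ) * Complex.I * μ ∈ spectrum ℂ (((l : ℂ) * Complex.I) • b) :=
    spectrum.smul_mem_smul_iff (r := Units.mk0 _ hu) |>.mpr hμ
  calc Real.exp (-(l * μ.im)) = ‖exp ((l : ℂ) * Complex.I * μ)‖ := by
        rw [← Complex.exp_eq_exp_ℂ, Complex.norm_exp]; simp
    _ ≤ _ := spectrum.norm_exp_le_of_mem hmem

lemma norm_le_mul_rpow_of_norm_sub_one_le {B : Type*} [NormedRing B] {x : B} {c r : ℝ}
    (hc : 0 ≤ c) (hr : 0 ≤ r) (h : ‖x - 1‖ ≤ c * (1 + r) ^ c) :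
    ‖x‖ ≤ (c + ‖(1 : B)‖) * (1 + r) ^ c := by
  have hone : 1 ≤ (1 + r) ^ c := Real.one_le_rpow (by linarith) hc
  calc ‖x‖ ≤ ‖(1 : B)‖ + ‖x - 1‖ := norm_le_norm_add_norm_sub' x 1
    _ ≤ ‖(1 : B)‖ * (1 + r) ^ c + c * (1 + r) ^ c := by
        gcongr; exact le_mul_of_one_le_right (norm_nonneg _) hone
    _ = (c + ‖(1 : B)‖) * (1 + r) ^ c := by ring

/-- A polynomially bounded element of a unital complex Banach algebra has real spectrum. -/
theorem stmt3 {B : Type*} [NormedRing B] [NormedAlgebra ℂ B] [CompleteSpace B]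
    (b : B)
    (hpb : ∃ c : ℝ, 0 < c ∧ ∀ l : ℝ,
      ‖NormedSpace.exp (((l : ℂ) * Complex.I) • b) - 1‖ ≤ c * (1 + |l|) ^ c) :
    ∀ μ ∈ spectrum ℂ b, μ.im = 0 := by
  obtain ⟨c, hc, hbound⟩ := hpb
  intro μ hμ
  by_contra hs
  refine Real.not_forall_exp_mul_le_mul_rpow (C := (c + ‖(1 : B)‖) * ‖(1 : B)‖) (c := c)
    (abs_pos.2 hs) fun t ht => ?_
  obtain ⟨l, hl_abs, hl_exp⟩ : ∃ l : ℝ, |l| = t ∧ -(l * μ.im) = |μ.im| * t := by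
    rcases abs_cases μ.im with ⟨h, -⟩ | ⟨h, -⟩
    exacts [⟨-t, by simp [ht.le], by rw [h]; ring⟩, ⟨t, abs_of_pos ht, by rw [h]; ring⟩]
  have hl : l ≠ 0 := by rintro rfl; simp at hl_abs; linarith
  calc Real.exp (|μ.im| * t) ≤ ‖exp (((l : ℂ) * Complex.I) • b)‖ * ‖(1 : B)‖ :=
        hl_exp ▸ spectrum.exp_neg_mul_im_le_norm_exp_smul hμ hl
    _ ≤ (c + ‖(1 : B)‖) * (1 + t) ^ c * ‖(1 : B)‖ := by
        gcongr
        exact norm_le_mul_rpow_of_norm_sub_one_le hc.le ht.le (hl_abs ▸ hbound l)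
    _ = (c + ‖(1 : B)‖) * ‖(1 : B)‖ * (1 + t) ^ c := by ring
end

section
/- Let A be a unital complex *-algebra, 𝔠 a unital C*-algebra, and σ : A → 𝔠 a unital star-algebra homomorphism such that spec_A(a) ⊆ spec_𝔠(σ(a)) for all a ∈ A. Let H be a complex Hilbert space and π : A → B(H) a unital star-algebra homomorphism into the bounded operators on H. Then ‖π(a)‖ ≤ ‖σ(a)‖ for every a ∈ A. -/
lemma spectralRadius_mono {𝕜 : Type*} [NormedField 𝕜] {A B : Type*} [NormedRing A]
    [NormedAlgebra 𝕜 A] [NormedRing B] [NormedAlgebra 𝕜 B] {a : A} {b : B}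
    (h : spectrum 𝕜 a ⊆ spectrum 𝕜 b) : spectralRadius 𝕜 a ≤ spectralRadius 𝕜 b := by
  simp only [spectralRadius]
  exact iSup₂_le fun k hk => le_iSup₂ (f := fun k (_ : k ∈ spectrum 𝕜 b) => (‖k‖₊ : ENNReal)) k (h hk)

/-- If `σ : A → 𝔠` is a unital star-homomorphism into a unital C*-algebra with
`spec_A(a) ⊆ spec_𝔠(σ a)` for all `a`, then any unital star-representation `π` of `A`
on a complex Hilbert space satisfies `‖π a‖ ≤ ‖σ a‖`. -/
theorem stmt7 {A : Type*} [Ring A] [StarRing A] [Algebra ℂ A] [StarModule ℂ A]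
    {𝔠 : Type*} [NormedRing 𝔠] [StarRing 𝔠] [CStarRing 𝔠] [NormedAlgebra ℂ 𝔠]
    [CompleteSpace 𝔠] [StarModule ℂ 𝔠]
    (σ : A →⋆ₐ[ℂ] 𝔠) (hspec : ∀ a : A, spectrum ℂ a ⊆ spectrum ℂ (σ a))
    {H : Type*} [NormedAddCommGroup H] [InnerProductSpace ℂ H] [CompleteSpace H]
    (π : A →⋆ₐ[ℂ] (H →L[ℂ] H)) (a : A) :
    ‖π a‖ ≤ ‖σ a‖ := by
  letI : CStarAlgebra 𝔠 := { }
  set b := star a * a with hb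
  have hsaπ : IsSelfAdjoint (π b) := by
    simp only [hb, map_mul, map_star]
    exact IsSelfAdjoint.star_mul_self _
  have hsaσ : IsSelfAdjoint (σ b) := by
    simp only [hb, map_mul, map_star]
    exact IsSelfAdjoint.star_mul_self _
  have h1 : (‖π b‖₊ : ENNReal) ≤ (‖σ b‖₊ : ENNReal) := by
    rw [← hsaπ.spectralRadius_eq_nnnorm, ← hsaσ.spectralRadius_eq_nnnorm]
    exact spectralRadius_mono
      ((AlgHom.spectrum_apply_subset π.toAlgHom b).trans (hspec b))
  have h2 : ‖π b‖ ≤ ‖σ b‖ := by exact_mod_cast h1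
  have hπ : ‖π a‖ * ‖π a‖ = ‖π b‖ := by
    rw [hb, map_mul, map_star]; exact CStarRing.norm_star_mul_self.symm
  have hσ : ‖σ a‖ * ‖σ a‖ = ‖σ b‖ := by
    rw [hb, map_mul, map_star]; exact CStarRing.norm_star_mul_self.symm
  nlinarith [norm_nonneg (π a), norm_nonneg (σ a)]
end
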